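/- Let $M$ be a compact smooth $n$-manifold, $Q$ an invertible symmetric real $(n+2)\times(n+2)$ matrix, and $F : M \to \mathbb{R}^{n+2}$ a $C^1$ immersion with image in the cone $\{x : x \cdot Qx = 0\}$. If $F$ has no pair of parallel tangent planes (no distinct $p,q$ with $dF(T_pM) = dF(T_qM)$), then the energy function $\mathcal{E}_F(p,q) = (F(p)-F(q)) \cdot Q(F(p)-F(q))$ vanishes identically on $M \times M$; equivalently, $F(p) \cdot QF(q) = 0$ for all $p, q \in M$. -/

import Mathlib

/-! Let `A` be `Q` acting on Euclidean space. The pairing `f (p, q) = ⟪F p, A (F q)⟫` is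
continuous on the compact `M × M`, so it suffices to show that it vanishes at its extremal pairs `(a, b)`. There
the tangent plane at `a` is orthogonal to `A (F a)` (differentiate the cone equation) and to
`A (F b)` (first-order condition for `f (·, b)`), and symmetrically at `b`. If `f (a, b) ≠ 0`
these two normals are independent, so both tangent planes are the same codimension-two subspace
`{A (F a), A (F b)}ᗮ`, and `a ≠ b` because `f (a, a) = 0`: a pair of parallel tangent planes. -/

open Manifold Set Filter Topology Module
open scoped RealInnerProductSpace

section CriticalPoints

variable {E H M : Type*} [NormedAddCommGroup E] [NormedSpace ℝ E] [TopologicalSpace H]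
  {I : ModelWithCorners ℝ E H} [TopologicalSpace M] [ChartedSpace H M]

theorem IsLocalExtr.mfderiv_eq_zero [I.Boundaryless] {g : M → ℝ} {a : M}
    (h : IsLocalExtr g a) : mfderiv I 𝓘(ℝ, ℝ) g a = 0 := by
  by_cases hg : MDifferentiableAt I 𝓘(ℝ, ℝ) g a
  · have hchart : IsLocalExtr (g ∘ (extChartAt I a).symm) (extChartAt I a a) := by
      have htend : Tendsto (extChartAt I a).symm (𝓝 (extChartAt I a a)) (𝓝 a) := by
        simpa only [ContinuousAt, extChartAt_to_inv] using continuousAt_extChartAt_symm (I := I) a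
      have h' : IsExtrFilter g (𝓝 a) ((extChartAt I a).symm (extChartAt I a a)) := by
        rwa [extChartAt_to_inv]
      exact h'.comp_tendsto htend
    rw [hg.mfderiv, I.range_eq_univ, fderivWithin_univ]
    exact hchart.fderiv_eq_zero
  · exact mfderiv_zero_of_not_mdifferentiableAt hg

variable {E' : Type*} [NormedAddCommGroup E'] [InnerProductSpace ℝ E'] {F : M → E'} {a : M}

theorem HasFDerivAt.apply_mfderiv_eq_zero {g : E' → ℝ} {L : E' →L[ℝ] ℝ}
    (hg : HasFDerivAt g L (F a)) (hF : MDifferentiableAt I 𝓘(ℝ, E') F a)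
    (h : mfderiv I 𝓘(ℝ, ℝ) (g ∘ F) a = 0) (v : TangentSpace I a) :
    L (mfderiv I 𝓘(ℝ, E') F a v) = 0 := by
  rw [(hg.hasMFDerivAt.comp a hF.hasMFDerivAt).mfderiv] at h
  exact congr($h v)

theorem inner_mfderiv_eq_zero_of_isLocalExtr [I.Boundaryless] {c : E'}
    (hF : MDifferentiableAt I 𝓘(ℝ, E') F a) (h : IsLocalExtr (fun x ↦ ⟪F x, c⟫) a)
    (v : TangentSpace I a) : ⟪c, mfderiv I 𝓘(ℝ, E') F a v⟫ = 0 :=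
  (real_inner_comm _ _).trans <|
    (innerSLFlip ℝ c).hasFDerivAt.apply_mfderiv_eq_zero hF h.mfderiv_eq_zero v

theorem inner_mfderiv_eq_zero_of_inner_self_eq_zero {A : E' →L[ℝ] E'}
    (hA : (A : E' →ₗ[ℝ] E').IsSymmetric) (hF : MDifferentiableAt I 𝓘(ℝ, E') F a)
    (hcone : ∀ x, ⟪F x, A (F x)⟫ = 0) (v : TangentSpace I a) :
    ⟪A (F a), mfderiv I 𝓘(ℝ, E') F a v⟫ = 0 := by
  have hq : HasFDerivAt (fun y ↦ ⟪y, A y⟫)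
      ((fderivInnerCLM ℝ (F a, A (F a))).comp ((ContinuousLinearMap.id ℝ E').prod A)) (F a) :=
    (hasFDerivAt_id (F a)).inner ℝ A.hasFDerivAt
  have hq_apply : ∀ w : E',
      ((fderivInnerCLM ℝ (F a, A (F a))).comp ((ContinuousLinearMap.id ℝ E').prod A)) w =
        2 * ⟪A (F a), w⟫ := by
    intro w
    simp only [ContinuousLinearMap.comp_apply, ContinuousLinearMap.prod_apply,
      fderivInnerCLM_apply, ContinuousLinearMap.id_apply]
    rw [← ContinuousLinearMap.coe_coe, ← hA, ContinuousLinearMap.coe_coe,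
      real_inner_comm (A (F a)) w]
    ring
  have hconst : (fun y ↦ ⟪y, A y⟫) ∘ F = fun _ ↦ 0 := funext hcone
  have := hq.apply_mfderiv_eq_zero hF (hconst ▸ mfderiv_const) v
  linarith [hq_apply (mfderiv I 𝓘(ℝ, E') F a v)]

end CriticalPoints

section LinearAlgebra

variable {E' V : Type*} [NormedAddCommGroup E'] [InnerProductSpace ℝ E']

theorem linearIndependent_pair_of_inner {u w x y : E'} (hux : ⟪u, x⟫ = 0) (hwy : ⟪w, y⟫ = 0)
    (huy : ⟪u, y⟫ ≠ 0) (hwx : ⟪w, x⟫ ≠ 0) : LinearIndependent ℝ ![u, w] := by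
  rw [LinearIndependent.pair_iff]
  intro s t hst
  have hy := congr(⟪$hst, y⟫)
  have hx := congr(⟪$hst, x⟫)
  simp only [inner_add_left, real_inner_smul_left, inner_zero_left, hux, hwy] at hx hy
  exact ⟨by simpa [huy] using hy, by simpa [hwx] using hx⟩

theorem LinearMap.range_eq_orthogonal_span_pair [FiniteDimensional ℝ E'] [AddCommGroup V]
    [Module ℝ V] {L : V →ₗ[ℝ] E'} (hL : Function.Injective L)
    (hdim : finrank ℝ V + 2 = finrank ℝ E') {u w : E'} (huw : LinearIndependent ℝ ![u, w])
    (hu : ∀ v, ⟪u, L v⟫ = 0) (hw : ∀ v, ⟪w, L v⟫ = 0) :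
    LinearMap.range L = (Submodule.span ℝ {u, w})ᗮ := by
  have hspan : finrank ℝ (Submodule.span ℝ {u, w}) = 2 := by
    rw [← Matrix.range_cons_cons_empty, finrank_span_eq_card huw, Fintype.card_fin]
  refine Submodule.eq_of_le_of_finrank_eq ?_ ?_
  · rintro _ ⟨v, rfl⟩
    rw [Submodule.mem_orthogonal]
    intro z hz
    obtain ⟨s, t, rfl⟩ := Submodule.mem_span_pair.1 hz
    simp [inner_add_left, real_inner_smul_left, hu, hw]
  · have := (Submodule.span ℝ {u, w}).finrank_add_finrank_orthogonal
    rw [finrank_range_of_inj hL]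
    omega

end LinearAlgebra

theorem Continuous.eq_zero_of_forall_isExtrOn {X : Type*} [TopologicalSpace X]
    [CompactSpace X] {f : X → ℝ} (hf : Continuous f)
    (hextr : ∀ x, IsExtrOn f univ x → f x = 0) (x : X) : f x = 0 := by
  obtain ⟨xmin, -, hmin⟩ := isCompact_univ.exists_isMinOn ⟨x, mem_univ x⟩ hf.continuousOn
  obtain ⟨xmax, -, hmax⟩ := isCompact_univ.exists_isMaxOn ⟨x, mem_univ x⟩ hf.continuousOn
  have h₁ := hextr xmin hmin.isExtr
  have h₂ := hextr xmax hmax.isExtr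
  linarith [isMinOn_iff.1 hmin x (mem_univ x), isMaxOn_iff.1 hmax x (mem_univ x)]

section ConeImmersion

variable {E H M E' : Type*} [NormedAddCommGroup E] [NormedSpace ℝ E] [TopologicalSpace H]
  {I : ModelWithCorners ℝ E H} [TopologicalSpace M] [ChartedSpace H M]
  [NormedAddCommGroup E'] [InnerProductSpace ℝ E'] {F : M → E'} {A : E' →L[ℝ] E'}

theorem IsExtrOn.isLocalExtr_inner_apply (hA : (A : E' →ₗ[ℝ] E').IsSymmetric) {a b : M}
    (h : IsExtrOn (fun z : M × M ↦ ⟪F z.1, A (F z.2)⟫) univ (a, b)) :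
    IsLocalExtr (fun x ↦ ⟪F x, A (F b)⟫) a ∧ IsLocalExtr (fun x ↦ ⟪F x, A (F a)⟫) b := by
  have hswap : (fun x ↦ ⟪F x, A (F a)⟫) = (fun z : M × M ↦ ⟪F z.1, A (F z.2)⟫) ∘ (a, ·) := by
    funext x
    rw [Function.comp_apply, real_inner_comm, ← ContinuousLinearMap.coe_coe, hA]
  refine ⟨(h.comp_mapsTo (mapsTo_univ (·, b) univ) rfl).isLocalExtr univ_mem, ?_⟩
  rw [hswap]
  exact (h.comp_mapsTo (mapsTo_univ (a, ·) univ) rfl).isLocalExtr univ_mem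

variable [I.Boundaryless] [FiniteDimensional ℝ E']

theorem range_mfderiv_eq_of_isLocalExtr_inner_apply (hA : (A : E' →ₗ[ℝ] E').IsSymmetric)
    (hF : MDifferentiable I 𝓘(ℝ, E') F)
    (hImm : ∀ p, Function.Injective (mfderiv I 𝓘(ℝ, E') F p))
    (hdim : finrank ℝ E + 2 = finrank ℝ E') (hcone : ∀ x, ⟪F x, A (F x)⟫ = 0) {a b : M}
    (ha : IsLocalExtr (fun x ↦ ⟪F x, A (F b)⟫) a) (hb : IsLocalExtr (fun x ↦ ⟪F x, A (F a)⟫) b)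
    (hab : ⟪F a, A (F b)⟫ ≠ 0) :
    (LinearMap.range (mfderiv I 𝓘(ℝ, E') F a).toLinearMap : Submodule ℝ E') =
      LinearMap.range (mfderiv I 𝓘(ℝ, E') F b).toLinearMap := by
  have hsymm : ∀ x y, ⟪A x, y⟫ = ⟪x, A y⟫ := hA
  have hind : LinearIndependent ℝ ![A (F a), A (F b)] :=
    linearIndependent_pair_of_inner (x := F a) (y := F b) (by rw [hsymm, hcone])
      (by rw [hsymm, hcone]) (by rwa [hsymm]) (by rwa [hsymm, real_inner_comm, hsymm])
  rw [LinearMap.range_eq_orthogonal_span_pair (E' := E') (hImm a) hdim hind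
      (inner_mfderiv_eq_zero_of_inner_self_eq_zero hA (hF a) hcone)
      (inner_mfderiv_eq_zero_of_isLocalExtr (hF a) ha), Set.pair_comm]
  exact (LinearMap.range_eq_orthogonal_span_pair (E' := E') (hImm b) hdim
    (LinearIndependent.pair_symm_iff.1 hind)
    (inner_mfderiv_eq_zero_of_inner_self_eq_zero hA (hF b) hcone)
    (inner_mfderiv_eq_zero_of_isLocalExtr (hF b) hb)).symm

theorem inner_apply_eq_zero_of_injective_range_mfderiv [CompactSpace M]
    (hA : (A : E' →ₗ[ℝ] E').IsSymmetric) (hF : ContMDiff I 𝓘(ℝ, E') 1 F)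
    (hImm : ∀ p, Function.Injective (mfderiv I 𝓘(ℝ, E') F p))
    (hdim : finrank ℝ E + 2 = finrank ℝ E') (hcone : ∀ x, ⟪F x, A (F x)⟫ = 0)
    (hGauss : Function.Injective fun p ↦
      (LinearMap.range (mfderiv I 𝓘(ℝ, E') F p).toLinearMap : Submodule ℝ E'))
    (p q : M) : ⟪F p, A (F q)⟫ = 0 := by
  have hcont : Continuous fun z : M × M ↦ ⟪F z.1, A (F z.2)⟫ :=
    (hF.continuous.comp continuous_fst).inner
      (A.continuous.comp (hF.continuous.comp continuous_snd))
  refine hcont.eq_zero_of_forall_isExtrOn (fun ⟨a, b⟩ hextr ↦ ?_) (p, q)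
  obtain ⟨ha, hb⟩ := hextr.isLocalExtr_inner_apply hA
  by_contra hab
  obtain rfl : a = b := hGauss <| range_mfderiv_eq_of_isLocalExtr_inner_apply hA
    (hF.mdifferentiable one_ne_zero) hImm hdim hcone ha hb hab
  exact hab (hcone a)

end ConeImmersion

theorem energy_vanishes_identically_conical_case_general
    {n : ℕ} {M : Type*} [TopologicalSpace M]
    [ChartedSpace (EuclideanSpace ℝ (Fin n)) M]
    [CompactSpace M]
    (Q : Matrix (Fin (n + 2)) (Fin (n + 2)) ℝ)
    (hQsymm : Q.IsSymm)
    (F : M → EuclideanSpace ℝ (Fin (n + 2)))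
    (hF : ContMDiff (𝓡 n) (𝓡 (n + 2)) 1 F)
    (hImm : ∀ p : M, Function.Injective (mfderiv (𝓡 n) (𝓡 (n + 2)) F p))
    (hQuad : ∀ p : M, dotProduct (F p) (Q.mulVec (F p)) = 0)
    (hnopar : ¬ ∃ p q : M, p ≠ q ∧
      (LinearMap.range (mfderiv (𝓡 n) (𝓡 (n + 2)) F p).toLinearMap :
          Submodule ℝ (EuclideanSpace ℝ (Fin (n + 2)))) =
        (LinearMap.range (mfderiv (𝓡 n) (𝓡 (n + 2)) F q).toLinearMap :
          Submodule ℝ (EuclideanSpace ℝ (Fin (n + 2))))) :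
    ∀ p q : M,
      dotProduct (F p - F q) (Q.mulVec (F p - F q)) = 0 ∧
      dotProduct (F p) (Q.mulVec (F q)) = 0 := by
  have hA :
      (Matrix.toEuclideanCLM (𝕜 := ℝ) Q : EuclideanSpace ℝ (Fin (n + 2)) →ₗ[ℝ] _).IsSymmetric :=
    Matrix.isSymmetric_toEuclideanLin_iff.mpr (Matrix.isHermitian_iff_isSymm.mpr hQsymm)
  have hpair : ∀ p q, dotProduct (F p) (Q.mulVec (F q)) = 0 := by
    intro p q
    rw [← Matrix.inner_toEuclideanCLM]
    refine inner_apply_eq_zero_of_injective_range_mfderiv hA hF hImm (by simp) (fun x ↦ ?_)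
      (fun p q h ↦ not_not.1 fun hpq ↦ hnopar ⟨p, q, hpq, h⟩) p q
    rw [Matrix.inner_toEuclideanCLM, hQuad]
  intro p q
  refine ⟨?_, hpair p q⟩
  simp only [WithLp.ofLp_sub, Matrix.mulVec_sub, sub_dotProduct, dotProduct_sub, hQuad, hpair,
    sub_zero]

/-- In the conical case, if a `C¹` immersion `F` of a compact smooth `n`-manifold into
the cone `{x : x ⬝ Q x = 0}` (`Q` invertible symmetric) has no pair of parallel tangent
planes, then the energy `𝓔_F(p,q) = (F p - F q) ⬝ Q (F p - F q)` vanishes identically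
on `M × M`; equivalently `F p ⬝ Q (F q) = 0` for all `p, q`. -/
theorem energy_vanishes_identically_conical_case
    {n : ℕ} {M : Type*} [TopologicalSpace M]
    [ChartedSpace (EuclideanSpace ℝ (Fin n)) M]
    [IsManifold (𝓡 n) (⊤ : ℕ∞) M] [CompactSpace M]
    (Q : Matrix (Fin (n + 2)) (Fin (n + 2)) ℝ)
    (hQsymm : Q.IsSymm) (hQinv : IsUnit Q.det)
    (F : M → EuclideanSpace ℝ (Fin (n + 2)))
    (hF : ContMDiff (𝓡 n) (𝓡 (n + 2)) 1 F)
    (hImm : ∀ p : M, Function.Injective (mfderiv (𝓡 n) (𝓡 (n + 2)) F p))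
    (hQuad : ∀ p : M, dotProduct (F p) (Q.mulVec (F p)) = 0)
    (hnopar : ¬ ∃ p q : M, p ≠ q ∧
      (LinearMap.range (mfderiv (𝓡 n) (𝓡 (n + 2)) F p).toLinearMap :
          Submodule ℝ (EuclideanSpace ℝ (Fin (n + 2)))) =
        (LinearMap.range (mfderiv (𝓡 n) (𝓡 (n + 2)) F q).toLinearMap :
          Submodule ℝ (EuclideanSpace ℝ (Fin (n + 2))))) :
    ∀ p q : M,
      dotProduct (F p - F q) (Q.mulVec (F p - F q)) = 0 ∧
      dotProduct (F p) (Q.mulVec (F q)) = 0 :=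
  energy_vanishes_identically_conical_case_general Q hQsymm F hF hImm hQuad hnopar
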